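/- If 0 < β < 2 and J > 0, then (1/2, 1/2) is the unique critical point of F_{β,J} on (0,1)² (the point where both partial derivatives of F_{β,J} vanish), and it is a local minimum of F_{β,J}; in particular, (1/2, 1/2) is the unique local minimum of F_{β,J} on (0,1)². -/

import Mathlib

open Real Set

/-- The two-spin (q = 2) two-component Curie–Weiss free energy. -/
noncomputable def F2 (β J x y : ℝ) : ℝ :=
  -(1 / 2) * (x ^ 2 + (1 - x) ^ 2 + y ^ 2 + (1 - y) ^ 2)
    - J * (x * y + (1 - x) * (1 - y))
    + ((1 + J) / β) * (x * Real.log x + (1 - x) * Real.log (1 - x)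
        + y * Real.log y + (1 - y) * Real.log (1 - y))

/-!
Write `c = (1 + J) / β`. Up to a constant, `F_{β,J}(x, y) = φ(x) + φ(y) + J (x - y)²` with
`φ(t) = -c H(t) - (1 + J)(t - 1/2)²`, `H` the binary entropy, so that
`φ'(t) = c (log t - log (1 - t) - 2βt + β)`. The derivative of `log t - log (1 - t)` is
`1/t + 1/(1 - t) ≥ 4 > 2β`, so `φ'` is strictly increasing on `(0, 1)`; it vanishes at `1/2`,
which is therefore a local minimum of `φ`, and `(1/2, 1/2)` one of `F_{β,J}`.
At a critical point `φ'(a) + 2J(a - b) = 0 = φ'(b) + 2J(b - a)`; monotonicity of `φ'` and `J ≥ 0`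
force `a = b`, and then `φ'(a) = 0` forces `a = 1/2`.
-/

lemma hasDerivAt_log_sub_log_one_sub {t : ℝ} (h0 : 0 < t) (h1 : t < 1) :
    HasDerivAt (fun t => log t - log (1 - t)) (t⁻¹ + (1 - t)⁻¹) t := by
  have h := ((hasDerivAt_id t).const_sub 1).log (by simp; linarith)
  exact ((hasDerivAt_log h0.ne').sub h).congr_deriv (by simp; ring)

lemma four_le_inv_add_inv_one_sub {t : ℝ} (h0 : 0 < t) (h1 : t < 1) : 4 ≤ t⁻¹ + (1 - t)⁻¹ := by
  have h1' : 0 < 1 - t := by linarith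
  rw [inv_add_inv h0.ne' h1'.ne', le_div_iff₀ (by positivity)]
  nlinarith [sq_nonneg (2 * t - 1)]

lemma strictMonoOn_log_sub_log_one_sub_sub_mul {κ : ℝ} (hκ : κ < 4) :
    StrictMonoOn (fun t => log t - log (1 - t) - κ * t) (Ioo 0 1) := by
  have hd : ∀ t ∈ Ioo (0 : ℝ) 1,
      HasDerivAt (fun t => log t - log (1 - t) - κ * t) (t⁻¹ + (1 - t)⁻¹ - κ) t := fun t ht =>
    ((hasDerivAt_log_sub_log_one_sub ht.1 ht.2).sub ((hasDerivAt_id t).const_mul κ)).congr_deriv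
      (by simp)
  refine strictMonoOn_of_deriv_pos (convex_Ioo 0 1)
    (fun t ht => (hd t ht).continuousAt.continuousWithinAt) fun t ht => ?_
  rw [interior_Ioo] at ht
  rw [(hd t ht).deriv]
  linarith [four_le_inv_add_inv_one_sub ht.1 ht.2]

lemma StrictMonoOn.eq_of_add_mul_sub_eq_zero {f : ℝ → ℝ} {s : Set ℝ} (hf : StrictMonoOn f s)
    {p a b d : ℝ} (hp : p ∈ s) (ha : a ∈ s) (hb : b ∈ s) (hfp : f p = 0) (hd : 0 ≤ d)
    (h₁ : f a + d * (a - b) = 0) (h₂ : f b + d * (b - a) = 0) : a = p ∧ b = p := by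
  have hab : a = b := by
    rcases lt_trichotomy a b with h | h | h
    · nlinarith [hf ha hb h]
    · exact h
    · nlinarith [hf hb ha h]
  subst hab
  have hfa : f a = f p := by linarith
  exact ⟨hf.injOn ha hp hfa, hf.injOn ha hp hfa⟩

noncomputable def siteEnergy (β J t : ℝ) : ℝ :=
  -((1 + J) / β) * binEntropy t - (1 + J) * (t - 1 / 2) ^ 2

noncomputable def siteEnergyDeriv (β J t : ℝ) : ℝ :=
  (1 + J) / β * (log t - log (1 - t) - 2 * β * t + β)

lemma F2_eq_siteEnergy_add (β J x y : ℝ) :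
    F2 β J x y = siteEnergy β J x + siteEnergy β J y + J * (x - y) ^ 2 - (1 + J) / 2 := by
  simp only [F2, siteEnergy, binEntropy, log_inv]
  ring

lemma F2_comm (β J x y : ℝ) : F2 β J x y = F2 β J y x := by
  simp only [F2]
  ring

section siteEnergy

variable {β J : ℝ}

lemma hasDerivAt_siteEnergy (hβ : β ≠ 0) {t : ℝ} (h0 : 0 < t) (h1 : t < 1) :
    HasDerivAt (siteEnergy β J) (siteEnergyDeriv β J t) t := by
  have hH := hasDerivAt_binEntropy h0.ne' h1.ne
  have hq := ((hasDerivAt_id t).sub_const (1 / 2)).pow 2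
  refine ((hH.const_mul _).sub (hq.const_mul (1 + J))).congr_deriv ?_
  simp only [siteEnergyDeriv, id, Nat.cast_ofNat]
  field_simp
  ring

lemma siteEnergyDeriv_half : siteEnergyDeriv β J (1 / 2) = 0 := by
  rw [siteEnergyDeriv, show (1 : ℝ) - 1 / 2 = 1 / 2 by norm_num, sub_self]
  ring

lemma strictMonoOn_siteEnergyDeriv (hβ0 : 0 < β) (hβ2 : β < 2) (hJ : 0 < 1 + J) :
    StrictMonoOn (siteEnergyDeriv β J) (Ioo 0 1) :=
  fun _ hs _ ht hst => mul_lt_mul_of_pos_left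
    (add_lt_add_left (strictMonoOn_log_sub_log_one_sub_sub_mul (κ := 2 * β) (by linarith)
      hs ht hst) β) (by positivity)

lemma isLocalMin_siteEnergy (hβ0 : 0 < β) (hβ2 : β < 2) (hJ : 0 < 1 + J) :
    IsLocalMin (siteEnergy β J) (1 / 2) := by
  have hD := strictMonoOn_siteEnergyDeriv hβ0 hβ2 hJ
  have hhalf : (1 / 2 : ℝ) ∈ Ioo 0 1 := by norm_num
  have hderiv : ∀ t ∈ Ioo (0 : ℝ) 1, HasDerivAt (siteEnergy β J) (siteEnergyDeriv β J t) t :=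
    fun t ht => hasDerivAt_siteEnergy hβ0.ne' ht.1 ht.2
  have hlo : Ioo (0 : ℝ) (1 / 2) ⊆ Ioo 0 1 := Ioo_subset_Ioo_right (by norm_num)
  have hhi : Ioo (1 / 2 : ℝ) 1 ⊆ Ioo 0 1 := Ioo_subset_Ioo_left (by norm_num)
  refine isLocalMin_of_deriv_Ioo (a := 0) (c := 1) (by norm_num) (by norm_num)
    (hderiv _ hhalf).continuousAt
    (fun t ht => (hderiv t (hlo ht)).differentiableAt.differentiableWithinAt)
    (fun t ht => (hderiv t (hhi ht)).differentiableAt.differentiableWithinAt)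
    (fun t ht => ?_) (fun t ht => ?_)
  · rw [(hderiv t (hlo ht)).deriv, ← siteEnergyDeriv_half (β := β) (J := J)]
    exact (hD (hlo ht) hhalf ht.2).le
  · rw [(hderiv t (hhi ht)).deriv, ← siteEnergyDeriv_half (β := β) (J := J)]
    exact (hD hhalf (hhi ht) ht.1).le

end siteEnergy

section F2

variable {β J : ℝ}

lemma hasDerivAt_F2_fst (hβ : β ≠ 0) (b : ℝ) {a : ℝ} (h0 : 0 < a) (h1 : a < 1) :
    HasDerivAt (fun x => F2 β J x b)
      (siteEnergyDeriv β J a + 2 * J * (a - b)) a := by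
  simp only [F2_eq_siteEnergy_add]
  have hq := (((hasDerivAt_id a).sub_const b).pow 2).const_mul J
  refine ((((hasDerivAt_siteEnergy hβ h0 h1).add_const _).add hq).sub_const _).congr_deriv ?_
  simp only [id, Nat.cast_ofNat]
  ring

lemma hasDerivAt_F2_snd (hβ : β ≠ 0) (a : ℝ) {b : ℝ} (h0 : 0 < b) (h1 : b < 1) :
    HasDerivAt (fun y => F2 β J a y)
      (siteEnergyDeriv β J b + 2 * J * (b - a)) b := by
  simpa only [F2_comm β J a] using hasDerivAt_F2_fst hβ a h0 h1

lemma isLocalMin_F2_half (hβ0 : 0 < β) (hβ2 : β < 2) (hJ : 0 ≤ J) :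
    IsLocalMin (fun p : ℝ × ℝ => F2 β J p.1 p.2) (1 / 2, 1 / 2) := by
  have hφ := isLocalMin_siteEnergy (J := J) hβ0 hβ2 (by linarith)
  have hsum := (hφ.comp_continuous (g := Prod.fst) (b := ((1 : ℝ) / 2, (1 : ℝ) / 2))
    (by fun_prop)).add (hφ.comp_continuous (g := Prod.snd) (by fun_prop))
  filter_upwards [hsum] with p hp
  simp only [Function.comp, F2_eq_siteEnergy_add] at hp ⊢
  nlinarith [mul_nonneg hJ (sq_nonneg (p.1 - p.2))]

end F2

theorem stmt_3 (β J : ℝ) (hβ0 : 0 < β) (hβ2 : β < 2) (hJ : 0 < J) :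
    (∀ a b : ℝ, a ∈ Ioo (0 : ℝ) 1 → b ∈ Ioo (0 : ℝ) 1 →
      ((deriv (fun x => F2 β J x b) a = 0 ∧ deriv (fun y => F2 β J a y) b = 0) ↔
        (a = 1 / 2 ∧ b = 1 / 2))) ∧
    IsLocalMin (fun p : ℝ × ℝ => F2 β J p.1 p.2) (1 / 2, 1 / 2) ∧
    (∀ a b : ℝ, a ∈ Ioo (0 : ℝ) 1 → b ∈ Ioo (0 : ℝ) 1 →
      IsLocalMin (fun p : ℝ × ℝ => F2 β J p.1 p.2) (a, b) → a = 1 / 2 ∧ b = 1 / 2) := by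
  have critical : ∀ a b : ℝ, a ∈ Ioo (0 : ℝ) 1 → b ∈ Ioo (0 : ℝ) 1 →
      ((deriv (fun x => F2 β J x b) a = 0 ∧ deriv (fun y => F2 β J a y) b = 0) ↔
        (a = 1 / 2 ∧ b = 1 / 2)) := by
    intro a b ha hb
    rw [(hasDerivAt_F2_fst hβ0.ne' b ha.1 ha.2).deriv,
      (hasDerivAt_F2_snd hβ0.ne' a hb.1 hb.2).deriv]
    constructor
    · rintro ⟨h₁, h₂⟩
      refine (strictMonoOn_siteEnergyDeriv hβ0 hβ2 (by linarith)).eq_of_add_mul_sub_eq_zero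
        (by norm_num) ha hb siteEnergyDeriv_half (by linarith) h₁ h₂
    · rintro ⟨rfl, rfl⟩
      simp only [siteEnergyDeriv_half, sub_self, mul_zero, add_zero, and_self]
  refine ⟨critical, isLocalMin_F2_half hβ0 hβ2 hJ.le, fun a b ha hb hmin => ?_⟩
  have hx : IsLocalMin (fun x => F2 β J x b) a :=
    hmin.comp_continuous (g := fun x => (x, b)) (by fun_prop)
  have hy : IsLocalMin (fun y => F2 β J a y) b :=
    hmin.comp_continuous (g := fun y => (a, y)) (by fun_prop)
  exact (critical a b ha hb).1 ⟨hx.deriv_eq_zero, hy.deriv_eq_zero⟩
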